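/- In a DGLA, assume δX_k = −Σ_{j=1}^k [B_j, X_{k−j}] for 0 ≤ k ≤ n (where the empty sum for k=0 means δX₀ = 0), and δB_k = −(1/2) Σ_{i=1}^{k−1} [B_i, B_{k−i}] for all k ≥ 1, with X_r of shifted degree 0 and B_p of shifted degree 1. Then δ(Σ_{k=1}^{n+1} [B_k, X_{n+1−k}]) = 0. -/

import Mathlib

/-!
Write `N = n + 1` and `O = Σ_k [B_k, X_{N-k}]`. Leibniz for the odd `B_k` together with the
equations for `δB` and `δX` gives `δO = -½ T + S` with `T = Σ_{k+j ≤ N} [[B_k, B_j], X_{N-k-j}]`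
and `S = Σ_{k+j ≤ N} [B_k, [B_j, X_{N-k-j}]]`. Symmetrising `S` in `(k, j)`, the Jacobi identity
for two odd elements, `[x, [y, z]] + [y, [x, z]] = [[x, y], z]`, gives `2 S = T`, so `δO = 0`.
-/

/-- A differential graded Lie algebra structure on a `ℚ`-vector space `V`:
a grading by submodules `G i`, a bilinear bracket `br` and a degree `+1`
differential `d`, satisfying graded skew-symmetry, the graded Jacobi identity
and the graded Leibniz rule (signs computed from the degrees of homogeneous
elements). -/
structure DGLA (V : Type*) [AddCommGroup V] [Module ℚ V] where
  /-- the grading -/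
  G : ℤ → Submodule ℚ V
  /-- the graded Lie bracket -/
  br : V →ₗ[ℚ] V →ₗ[ℚ] V
  /-- the differential -/
  d : V →ₗ[ℚ] V
  supr_top : ⨆ i, G i = ⊤
  br_mem : ∀ {p q : ℤ} {x y : V}, x ∈ G p → y ∈ G q → br x y ∈ G (p + q)
  d_mem : ∀ {p : ℤ} {x : V}, x ∈ G p → d x ∈ G (p + 1)
  d_sq : ∀ x : V, d (d x) = 0
  skew : ∀ {p q : ℤ} {x y : V}, x ∈ G p → y ∈ G q →
    br x y = -(((-1 : ℚ) ^ (p * q)) • br y x)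
  jacobi : ∀ {p q r : ℤ} {x y z : V}, x ∈ G p → y ∈ G q → z ∈ G r →
    br x (br y z) = br (br x y) z + ((-1 : ℚ) ^ (p * q)) • br y (br x z)
  leibniz : ∀ {p : ℤ} {x : V}, x ∈ G p → ∀ y : V,
    d (br x y) = br (d x) y + ((-1 : ℚ) ^ p) • br x (d y)

open Finset

theorem sum_Icc_sum_Icc_swap {M : Type*} [AddCommMonoid M] (N : ℕ) (g : ℕ → ℕ → M) :
    ∑ k ∈ Icc 1 N, ∑ j ∈ Icc 1 (N - k), g k j = ∑ k ∈ Icc 1 N, ∑ j ∈ Icc 1 (N - k), g j k :=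
  sum_comm' fun _ _ => by simp only [mem_Icc]; omega

theorem sum_Icc_sum_Icc_sub_eq {M : Type*} [AddCommMonoid M] (N : ℕ) (g : ℕ → ℕ → ℕ → M) :
    ∑ k ∈ Icc 1 N, ∑ i ∈ Icc 1 (k - 1), g i (k - i) k =
      ∑ i ∈ Icc 1 N, ∑ j ∈ Icc 1 (N - i), g i j (i + j) := by
  rw [sum_comm' (t' := Icc 1 N) (s' := fun i => Icc (i + 1) N)
    fun _ _ => by simp only [mem_Icc]; omega]
  refine sum_congr rfl fun i _ => sum_nbij' (· - i) (i + ·) ?_ ?_ ?_ ?_ ?_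
  all_goals intro k hk; simp only [mem_Icc] at hk ⊢
  all_goals first | omega | rw [Nat.add_sub_cancel' (by omega)]

namespace DGLA

variable {V : Type*} [AddCommGroup V] [Module ℚ V] (L : DGLA V)

theorem d_br_of_mem_one {x : V} (hx : x ∈ L.G 1) (y : V) :
    L.d (L.br x y) = L.br (L.d x) y - L.br x (L.d y) := by
  rw [L.leibniz hx, zpow_one, neg_one_smul, sub_eq_add_neg]

theorem br_br_add_br_br_of_mem_one {x y z : V} {r : ℤ} (hx : x ∈ L.G 1) (hy : y ∈ L.G 1)
    (hz : z ∈ L.G r) : L.br x (L.br y z) + L.br y (L.br x z) = L.br (L.br x y) z := by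
  rw [L.jacobi hx hy hz, mul_one, zpow_one, neg_one_smul, neg_add_cancel_right]

end DGLA

/-- In a DGLA, assume `δX_k = −Σ_{j=1}^k [B_j, X_{k−j}]` for `0 ≤ k ≤ n` and
`δB_k = −(1/2) Σ_{i=1}^{k−1} [B_i, B_{k−i}]` for all `k ≥ 1`, with the `X`'s of
shifted degree 0 and the `B`'s of shifted degree 1.  Then the obstruction
`Σ_{k=1}^{n+1} [B_k, X_{n+1−k}]` is a cocycle. -/
theorem general_obstruction_is_cocycle {V : Type*} [AddCommGroup V] [Module ℚ V]
    (L : DGLA V) (B X : ℕ → V) (n : ℕ)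
    (hB : ∀ k, B k ∈ L.G 1) (hX : ∀ k, X k ∈ L.G 0)
    (hdX : ∀ k ≤ n, L.d (X k) = -∑ j ∈ Finset.Icc 1 k, L.br (B j) (X (k - j)))
    (hdB : ∀ k, 1 ≤ k →
      L.d (B k) = -((1/2 : ℚ) • ∑ i ∈ Finset.Icc 1 (k - 1), L.br (B i) (B (k - i)))) :
    L.d (∑ k ∈ Finset.Icc 1 (n + 1), L.br (B k) (X (n + 1 - k))) = 0 := by
  set N := n + 1
  set T := ∑ k ∈ Icc 1 N, ∑ j ∈ Icc 1 (N - k), L.br (L.br (B k) (B j)) (X (N - (k + j)))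
  set S := ∑ k ∈ Icc 1 N, ∑ j ∈ Icc 1 (N - k), L.br (B k) (L.br (B j) (X (N - (k + j))))
  have hdO : L.d (∑ k ∈ Icc 1 N, L.br (B k) (X (N - k))) = -((1/2 : ℚ) • T) + S := by
    have hterm : ∀ k ∈ Icc 1 N, L.d (L.br (B k) (X (N - k))) =
        -((1/2 : ℚ) • ∑ i ∈ Icc 1 (k - 1), L.br (L.br (B i) (B (k - i))) (X (N - k))) +
          ∑ j ∈ Icc 1 (N - k), L.br (B k) (L.br (B j) (X (N - (k + j)))) := by
      intro k hk
      rw [mem_Icc] at hk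
      rw [L.d_br_of_mem_one (hB k), hdB k hk.1, hdX (N - k) (by omega)]
      simp only [map_neg, map_smul, map_sum, LinearMap.neg_apply, LinearMap.smul_apply,
        LinearMap.sum_apply, Nat.sub_sub, sub_neg_eq_add]
    rw [map_sum, sum_congr rfl hterm, sum_add_distrib, sum_neg_distrib, ← smul_sum,
      sum_Icc_sum_Icc_sub_eq N fun i j k => L.br (L.br (B i) (B j)) (X (N - k))]
  have hST : S + S = T := by
    have hswap : S = _ := sum_Icc_sum_Icc_swap N _
    nth_rewrite 2 [hswap]
    rw [← sum_add_distrib]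
    refine sum_congr rfl fun k _ => ?_
    rw [← sum_add_distrib]
    refine sum_congr rfl fun j _ => ?_
    rw [add_comm j k, L.br_br_add_br_br_of_mem_one (hB k) (hB j) (hX _)]
  rw [hdO, ← hST]
  module
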